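/- Suppose c ≥ 0, 0 < ρ < 1, z ≥ 0 is a constant, and y : [0,b) → ℝ is nonnegative, locally integrable, and satisfies y(t) ≤ z + c·∫₀^t (t−τ)^{ρ−1}·y(τ) dτ for all t ∈ [0,b). Then y(t) ≤ z·E_{ρ,1}(c·Γ(ρ)·t^ρ) for all t ∈ [0,b), where E_{ρ,1} is the Mittag-Leffler function. -/

import Mathlib

/-!
Picard iteration. With `J^β f (t) = ∫₀ᵗ (t - σ)^(β-1) f σ dσ`, the kernels compose through the
Beta integral, `J^a (J^b f) = B(a, b) J^(a+b) f` (Fubini), and `c J^ρ` maps the `k`-th term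
`(c Γ(ρ) σ^ρ)^k / Γ(kρ + 1)` of the Mittag-Leffler series to the `(k+1)`-st. After `n` steps
`y(t) ≤ z (n-th partial sum of E_{ρ,1}(c Γ(ρ) t^ρ)) + (c Γ(ρ))^n / Γ(nρ) · J^(nρ) y (t)`, and once
`nρ ≥ 1` the remainder is at most `(c Γ(ρ) t^ρ)^n / Γ(nρ) · t⁻¹ ∫₀ᵗ y⁺`. This tends to `0` because
`∑ₙ qⁿ / Γ(nρ + ρ)` converges by the ratio test, thanks to Gautschi's inequality
`Γ(x + ρ) ≥ Γ(x) (x + ρ - 1)^ρ`, a consequence of the log-convexity of `Γ`.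
Working with `y⁺` and `ℝ≥0∞`-valued integrals removes all integrability side conditions; `y⁺`
satisfies the same inequality because the kernel is nonnegative.
-/

open Real MeasureTheory intervalIntegral

/-- One-parameter Mittag-Leffler function E_{ρ,1} (real argument). -/
noncomputable def mittagLeffler1 (ρ z : ℝ) : ℝ :=
  ∑' k : ℕ, z ^ k / Real.Gamma (k * ρ + 1)

open Set Filter Topology
open scoped ENNReal
open ProbabilityTheory (beta beta_pos)

theorem Real.Gamma_mul_rpow_le_Gamma_add {x ρ : ℝ} (hρ : 0 < ρ) (hρ1 : ρ < 1)
    (hx : 0 < x + ρ - 1) : Gamma x * (x + ρ - 1) ^ ρ ≤ Gamma (x + ρ) := by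
  set u := x + ρ - 1 with hu
  have hΓu : 0 < Gamma u := Gamma_pos_of_pos hx
  have hΓu1 : Gamma (x + ρ) = u * Gamma u := by
    rw [← Gamma_add_one hx.ne', hu, sub_add_cancel]
  -- log-convexity of Γ between `u` and `u + 1 = x + ρ`, at the point `x`
  have hconv := Gamma_mul_add_mul_le_rpow_Gamma_mul_rpow_Gamma (a := 1 - ρ) (b := ρ)
    (by linarith : 0 < x + ρ) hx (by linarith) hρ (by ring)
  rw [show (1 - ρ) * (x + ρ) + ρ * u = x by ring, hΓu1,
    mul_rpow hx.le hΓu.le, mul_assoc, ← rpow_add hΓu, show 1 - ρ + ρ = 1 by ring,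
    rpow_one] at hconv
  calc Gamma x * u ^ ρ ≤ u ^ (1 - ρ) * Gamma u * u ^ ρ := by gcongr
    _ = u * Gamma u := by
      rw [mul_right_comm, ← rpow_add hx, show 1 - ρ + ρ = 1 by ring, rpow_one]
    _ = Gamma (x + ρ) := hΓu1.symm

theorem summable_pow_div_Gamma_mul_add (x : ℝ) {ρ s : ℝ} (hρ : 0 < ρ) (hρ1 : ρ < 1)
    (hs : 0 < s) : Summable fun k : ℕ => x ^ k / Gamma (k * ρ + s) := by
  refine summable_of_ratio_norm_eventually_le (r := 1 / 2) (by norm_num) ?_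
  have hlin : Tendsto (fun k : ℕ => (k : ℝ) * ρ + s + ρ - 1) atTop atTop :=
    (tendsto_atTop_add_const_right _ (s + ρ - 1)
      (tendsto_natCast_atTop_atTop.atTop_mul_const hρ)).congr fun k => by ring
  filter_upwards [hlin.eventually_gt_atTop 0,
    ((tendsto_rpow_atTop hρ).comp hlin).eventually_ge_atTop (2 * |x|)] with k hk hk'
  have hΓ : 0 < Gamma (k * ρ + s) := Gamma_pos_of_pos (by positivity)
  have hΓ' : 0 < Gamma (k * ρ + s + ρ) := Gamma_pos_of_pos (by positivity)
  have hgrowth := Gamma_mul_rpow_le_Gamma_add hρ hρ1 hk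
  simp only [Function.comp_apply] at hk'
  rw [show ((k + 1 : ℕ) : ℝ) * ρ + s = k * ρ + s + ρ by push_cast; ring]
  simp only [norm_div, norm_pow, Real.norm_eq_abs, abs_of_pos hΓ, abs_of_pos hΓ']
  rw [div_le_iff₀ hΓ']
  calc |x| ^ (k + 1) = |x| ^ k * |x| := pow_succ _ _
    _ ≤ |x| ^ k * ((k * ρ + s + ρ - 1) ^ ρ / 2) := by gcongr; linarith
    _ = 1 / 2 * (|x| ^ k / Gamma (k * ρ + s)) * (Gamma (k * ρ + s) * (k * ρ + s + ρ - 1) ^ ρ) := by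
      field_simp
    _ ≤ 1 / 2 * (|x| ^ k / Gamma (k * ρ + s)) * Gamma (k * ρ + s + ρ) := by gcongr

theorem hasSum_mittagLeffler1 (x : ℝ) {ρ : ℝ} (hρ : 0 < ρ) (hρ1 : ρ < 1) :
    HasSum (fun k : ℕ => x ^ k / Gamma (k * ρ + 1)) (mittagLeffler1 ρ x) :=
  (summable_pow_div_Gamma_mul_add x hρ hρ1 one_pos).hasSum

theorem mittagLeffler1_zero (ρ : ℝ) : mittagLeffler1 ρ 0 = 1 := by
  rw [mittagLeffler1, tsum_eq_single 0 fun k hk => by simp [zero_pow hk]]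
  simp

theorem tendsto_pow_div_Gamma_mul (x : ℝ) {ρ : ℝ} (hρ : 0 < ρ) (hρ1 : ρ < 1) :
    Tendsto (fun n : ℕ => x ^ n / Gamma (n * ρ)) atTop (𝓝 0) := by
  rw [← tendsto_add_atTop_iff_nat 1]
  have h := ((summable_pow_div_Gamma_mul_add x hρ hρ1 hρ).tendsto_atTop_zero).const_mul x
  rw [mul_zero] at h
  refine h.congr fun n => ?_
  rw [pow_succ, show ((n + 1 : ℕ) : ℝ) * ρ = n * ρ + ρ by push_cast; ring]
  ring

theorem integral_rpow_mul_sub_rpow {a b u : ℝ} (ha : 0 < a) (hb : 0 < b) (hu : 0 < u) :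
    ∫ x in (0 : ℝ)..u, x ^ (a - 1) * (u - x) ^ (b - 1) = beta a b * u ^ (a + b - 1) := by
  apply Complex.ofReal_injective
  have hbeta := Complex.betaIntegral_scaled a b hu
  rw [Complex.betaIntegral_eq_Gamma_mul_div _ _ (by simpa) (by simpa)] at hbeta
  rw [← intervalIntegral.integral_ofReal]
  convert hbeta using 1
  · refine intervalIntegral.integral_congr fun x hx => ?_
    rw [uIcc_of_le hu.le] at hx
    simp only [Complex.ofReal_mul, Complex.ofReal_cpow hx.1,
      Complex.ofReal_cpow (sub_nonneg.2 hx.2)]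
    push_cast; ring
  · rw [beta, ← Complex.ofReal_add, Complex.Gamma_ofReal, Complex.Gamma_ofReal,
      Complex.Gamma_ofReal, Complex.ofReal_mul, Complex.ofReal_cpow hu.le]
    push_cast; ring

theorem lintegral_Ioc_sub_rpow_mul_sub_rpow {a b σ t : ℝ} (ha : 0 < a) (hb : 0 < b)
    (hσt : σ < t) :
    ∫⁻ τ in Ioc σ t, ENNReal.ofReal ((t - τ) ^ (a - 1)) * ENNReal.ofReal ((τ - σ) ^ (b - 1)) =
      ENNReal.ofReal (beta a b * (t - σ) ^ (a + b - 1)) := by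
  have hval : ∫ τ in σ..t, (t - τ) ^ (a - 1) * (τ - σ) ^ (b - 1) =
      beta a b * (t - σ) ^ (a + b - 1) := by
    have hshift := intervalIntegral.integral_comp_sub_right
      (fun x => x ^ (b - 1) * (t - σ - x) ^ (a - 1)) σ (a := σ) (b := t)
    simp only [sub_self, sub_sub_sub_cancel_right] at hshift
    simp only [mul_comm ((t - _) ^ (a - 1))]
    rw [hshift, integral_rpow_mul_sub_rpow hb ha (by linarith), beta, beta, mul_comm (Gamma b),
      add_comm b a]
  have hnonneg : ∀ τ ∈ Ioc σ t, 0 ≤ (t - τ) ^ (a - 1) * (τ - σ) ^ (b - 1) := fun τ hτ =>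
    mul_nonneg (rpow_nonneg (by linarith [hτ.2]) _) (rpow_nonneg (by linarith [hτ.1]) _)
  have hint : IntervalIntegrable (fun τ => (t - τ) ^ (a - 1) * (τ - σ) ^ (b - 1)) volume σ t :=
    intervalIntegrable_of_integral_ne_zero <| by
      rw [hval]; exact (mul_pos (beta_pos ha hb) (rpow_pos_of_pos (by linarith) _)).ne'
  rw [← hval, intervalIntegral.integral_of_le hσt.le, ofReal_integral_eq_lintegral_ofReal hint.1
    (ae_restrict_of_forall_mem measurableSet_Ioc hnonneg)]
  refine setLIntegral_congr_fun measurableSet_Ioc fun τ hτ => ?_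
  rw [ENNReal.ofReal_mul (rpow_nonneg (by linarith [hτ.2]) _)]

/-- `Γ(β)` times the Riemann–Liouville fractional integral `I^β f (t)`. -/
noncomputable def fracLIntegral (β : ℝ) (f : ℝ → ℝ≥0∞) (t : ℝ) : ℝ≥0∞ :=
  ∫⁻ σ in Ioc 0 t, ENNReal.ofReal ((t - σ) ^ (β - 1)) * f σ

section fracLIntegral

variable {β t : ℝ} {f g : ℝ → ℝ≥0∞}

theorem fracLIntegral_congr (h : ∀ σ ∈ Ioc 0 t, f σ = g σ) :
    fracLIntegral β f t = fracLIntegral β g t :=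
  setLIntegral_congr_fun measurableSet_Ioc fun σ hσ => by rw [h σ hσ]

theorem fracLIntegral_mono (h : ∀ σ ∈ Ioc 0 t, f σ ≤ g σ) :
    fracLIntegral β f t ≤ fracLIntegral β g t :=
  setLIntegral_mono' measurableSet_Ioc fun σ hσ => by gcongr; exact h σ hσ

theorem fracLIntegral_add (hf : Measurable f) :
    fracLIntegral β (fun σ => f σ + g σ) t = fracLIntegral β f t + fracLIntegral β g t := by
  simp only [fracLIntegral, mul_add]
  exact lintegral_add_left (by fun_prop) _

theorem fracLIntegral_finsetSum {ι : Type*} (s : Finset ι) {f : ι → ℝ → ℝ≥0∞}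
    (hf : ∀ i ∈ s, Measurable (f i)) :
    fracLIntegral β (fun σ => ∑ i ∈ s, f i σ) t = ∑ i ∈ s, fracLIntegral β (f i) t := by
  simp only [fracLIntegral, Finset.mul_sum]
  exact lintegral_finsetSum _ fun i hi => by have := hf i hi; fun_prop

theorem fracLIntegral_const_mul {c : ℝ≥0∞} (hc : c ≠ ∞) :
    fracLIntegral β (fun σ => c * f σ) t = c * fracLIntegral β f t := by
  simp only [fracLIntegral, mul_left_comm _ c]
  exact lintegral_const_mul' _ _ hc

theorem fracLIntegral_rpow {a p : ℝ} (ha : 0 < a) (hp : 0 < p) (ht : 0 < t) :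
    fracLIntegral a (fun σ => ENNReal.ofReal (σ ^ (p - 1))) t =
      ENNReal.ofReal (beta a p * t ^ (a + p - 1)) := by
  simpa [fracLIntegral] using lintegral_Ioc_sub_rpow_mul_sub_rpow ha hp ht

theorem fracLIntegral_le_of_one_le (hβ : 1 ≤ β) :
    fracLIntegral β f t ≤ ENNReal.ofReal (t ^ (β - 1)) * ∫⁻ σ in Ioc 0 t, f σ := by
  rw [fracLIntegral, ← lintegral_const_mul' _ _ ENNReal.ofReal_ne_top]
  refine setLIntegral_mono' measurableSet_Ioc fun σ hσ => ?_
  gcongr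
  · linarith [hσ.2]
  · linarith [hσ.1]

end fracLIntegral

theorem fracLIntegral_fracLIntegral {a b t : ℝ} (ha : 0 < a) (hb : 0 < b) {f : ℝ → ℝ≥0∞}
    (hf : AEMeasurable f (volume.restrict (Ioc 0 t))) :
    fracLIntegral a (fracLIntegral b f) t =
      ENNReal.ofReal (beta a b) * fracLIntegral (a + b) f t := by
  set μ := volume.restrict (Ioc 0 t)
  let K : ℝ → ℝ → ℝ≥0∞ := fun τ σ =>
    if σ ≤ τ then ENNReal.ofReal ((t - τ) ^ (a - 1)) * (ENNReal.ofReal ((τ - σ) ^ (b - 1)) * f σ)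
    else 0
  have hK : AEMeasurable (Function.uncurry K) (μ.prod μ) := by
    have hf2 : AEMeasurable (fun p : ℝ × ℝ => f p.2) (μ.prod μ) := hf.comp_snd
    have : Function.uncurry K = {p : ℝ × ℝ | p.2 ≤ p.1}.indicator fun p =>
        ENNReal.ofReal ((t - p.1) ^ (a - 1)) *
          (ENNReal.ofReal ((p.1 - p.2) ^ (b - 1)) * f p.2) := by
      ext p; simp [K, Set.indicator_apply, Function.uncurry]
    rw [this]
    exact AEMeasurable.indicator (by fun_prop) (measurableSet_le measurable_snd measurable_fst)
  have hinner : ∀ τ ∈ Ioc 0 t,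
      ∫⁻ σ, K τ σ ∂μ = ENNReal.ofReal ((t - τ) ^ (a - 1)) * fracLIntegral b f τ := by
    intro τ hτ
    have : K τ = (Iic τ).indicator fun σ =>
        ENNReal.ofReal ((t - τ) ^ (a - 1)) * (ENNReal.ofReal ((τ - σ) ^ (b - 1)) * f σ) := by
      ext σ; simp [K, Set.indicator_apply]
    rw [this, lintegral_indicator measurableSet_Iic, Measure.restrict_restrict measurableSet_Iic,
      inter_comm, Ioc_inter_Iic, inf_eq_right.2 hτ.2,
      lintegral_const_mul' _ _ ENNReal.ofReal_ne_top, fracLIntegral]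
  have houter : ∀ σ ∈ Ioo 0 t, ∫⁻ τ, K τ σ ∂μ =
      ENNReal.ofReal (beta a b) * (ENNReal.ofReal ((t - σ) ^ (a + b - 1)) * f σ) := by
    intro σ hσ
    have : (fun τ => K τ σ) = (Ici σ).indicator fun τ =>
        ENNReal.ofReal ((t - τ) ^ (a - 1)) * ENNReal.ofReal ((τ - σ) ^ (b - 1)) * f σ := by
      ext τ; simp [K, Set.indicator_apply, mul_assoc]
    have hIcc : Ici σ ∩ Ioc 0 t = Icc σ t :=
      Set.ext fun τ => ⟨fun h => ⟨h.1, h.2.2⟩, fun h => ⟨h.1, hσ.1.trans_le h.1, h.2⟩⟩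
    rw [this, lintegral_indicator measurableSet_Ici, Measure.restrict_restrict measurableSet_Ici,
      hIcc, Measure.restrict_congr_set Ioc_ae_eq_Icc.symm,
      lintegral_mul_const _ (by fun_prop), lintegral_Ioc_sub_rpow_mul_sub_rpow ha hb hσ.2,
      ENNReal.ofReal_mul (beta_pos ha hb).le, mul_assoc]
  calc fracLIntegral a (fracLIntegral b f) t = ∫⁻ τ, ∫⁻ σ, K τ σ ∂μ ∂μ :=
        (setLIntegral_congr_fun measurableSet_Ioc hinner).symm
    _ = ∫⁻ σ, ∫⁻ τ, K τ σ ∂μ ∂μ := lintegral_lintegral_swap hK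
    _ = ∫⁻ σ in Ioo 0 t, ∫⁻ τ, K τ σ ∂μ := by rw [Measure.restrict_congr_set Ioo_ae_eq_Ioc]
    _ = _ := by
      rw [setLIntegral_congr_fun measurableSet_Ioo houter,
        lintegral_const_mul' _ _ ENNReal.ofReal_ne_top, fracLIntegral,
        Measure.restrict_congr_set Ioo_ae_eq_Ioc]

section Iteration

variable {c ρ : ℝ}

theorem ofReal_mul_fracLIntegral_mittagLeffler_term (hc : 0 ≤ c) (hρ : 0 < ρ) {s : ℝ}
    (hs : 0 < s) (k : ℕ) :
    ENNReal.ofReal c * fracLIntegral ρ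
        (fun σ => ENNReal.ofReal ((c * Gamma ρ * σ ^ ρ) ^ k / Gamma (k * ρ + 1))) s =
      ENNReal.ofReal ((c * Gamma ρ * s ^ ρ) ^ (k + 1) / Gamma ((k + 1 : ℕ) * ρ + 1)) := by
  have hterm : ∀ σ ∈ Ioc 0 s, ENNReal.ofReal ((c * Gamma ρ * σ ^ ρ) ^ k / Gamma (k * ρ + 1)) =
      ENNReal.ofReal ((c * Gamma ρ) ^ k / Gamma (k * ρ + 1)) *
        ENNReal.ofReal (σ ^ ((k * ρ + 1) - 1)) := by
    intro σ hσ
    rw [← ENNReal.ofReal_mul (by positivity), add_sub_cancel_right, mul_comm (k : ℝ),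
      rpow_mul_natCast hσ.1.le, mul_pow]
    ring_nf
  rw [fracLIntegral_congr hterm, fracLIntegral_const_mul ENNReal.ofReal_ne_top,
    fracLIntegral_rpow hρ (by positivity) hs, ← ENNReal.ofReal_mul (by positivity),
    ← ENNReal.ofReal_mul hc]
  congr 1
  rw [beta, show ρ + (k * ρ + 1) - 1 = ρ * (k + 1 : ℕ) by push_cast; ring,
    show ρ + (k * ρ + 1) = (k + 1 : ℕ) * ρ + 1 by push_cast; ring, rpow_mul_natCast hs.le]
  field_simp
  ring

theorem le_partialSum_add_fracLIntegral (z : ℝ) (hc : 0 ≤ c) (hρ : 0 < ρ) {t : ℝ}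
    {v : ℝ → ℝ≥0∞} (hv : AEMeasurable v (volume.restrict (Ioc 0 t)))
    (h : ∀ s ∈ Ioc 0 t, v s ≤ ENNReal.ofReal z + ENNReal.ofReal c * fracLIntegral ρ v s)
    {n : ℕ} (hn : 1 ≤ n) {s : ℝ} (hs : s ∈ Ioc 0 t) :
    v s ≤ ENNReal.ofReal z *
        ∑ k ∈ Finset.range n, ENNReal.ofReal ((c * Gamma ρ * s ^ ρ) ^ k / Gamma (k * ρ + 1)) +
      ENNReal.ofReal ((c * Gamma ρ) ^ n / Gamma (n * ρ)) * fracLIntegral (n * ρ) v s := by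
  induction n, hn using Nat.le_induction generalizing s with
  | base => simpa [(Gamma_pos_of_pos hρ).ne'] using h s hs
  | succ n hn ih =>
    have hnρ : 0 < (n : ℝ) * ρ := mul_pos (Nat.cast_pos.2 hn) hρ
    set T : ℕ → ℝ → ℝ≥0∞ := fun k σ =>
      ENNReal.ofReal ((c * Gamma ρ * σ ^ ρ) ^ k / Gamma (k * ρ + 1)) with hT
    set R : ℕ → ℝ≥0∞ := fun n => ENNReal.ofReal ((c * Gamma ρ) ^ n / Gamma (n * ρ)) with hR
    have hpartial : ENNReal.ofReal c * fracLIntegral ρ (fun σ => ∑ k ∈ Finset.range n, T k σ) s =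
        ∑ k ∈ Finset.range n, T (k + 1) s := by
      rw [fracLIntegral_finsetSum _ fun k _ => by fun_prop, Finset.mul_sum]
      exact Finset.sum_congr rfl fun k _ =>
        ofReal_mul_fracLIntegral_mittagLeffler_term hc hρ hs.1 k
    have hremainder :
        ENNReal.ofReal c * fracLIntegral ρ (fun σ => R n * fracLIntegral (n * ρ) v σ) s =
          R (n + 1) * fracLIntegral ((n + 1 : ℕ) * ρ) v s := by
      rw [fracLIntegral_const_mul ENNReal.ofReal_ne_top, fracLIntegral_fracLIntegral hρ hnρ
        (hv.mono_measure (Measure.restrict_mono (Ioc_subset_Ioc_right hs.2) le_rfl)),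
        ← mul_assoc, ← mul_assoc, ← ENNReal.ofReal_mul hc, ← ENNReal.ofReal_mul (by positivity),
        show ρ + n * ρ = (n + 1 : ℕ) * ρ by push_cast; ring]
      congr 2
      rw [beta, show ρ + n * ρ = (n + 1 : ℕ) * ρ by push_cast; ring]
      field_simp
      ring
    calc v s ≤ ENNReal.ofReal z + ENNReal.ofReal c * fracLIntegral ρ v s := h s hs
      _ ≤ ENNReal.ofReal z + ENNReal.ofReal c * fracLIntegral ρ
            (fun σ => ENNReal.ofReal z * ∑ k ∈ Finset.range n, T k σ +
              R n * fracLIntegral (n * ρ) v σ) s := by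
        gcongr
        exact fracLIntegral_mono fun σ hσ => ih ⟨hσ.1, hσ.2.trans hs.2⟩
      _ = _ := by
        rw [fracLIntegral_add (by fun_prop), fracLIntegral_const_mul ENNReal.ofReal_ne_top, mul_add,
          mul_left_comm, hpartial, hremainder, Finset.sum_range_succ' _ n]
        simp only [hT, hR, pow_zero, Nat.cast_zero, zero_mul, zero_add, Gamma_one, div_one,
          ENNReal.ofReal_one]
        ring

end Iteration

theorem tendsto_ofReal_pow_div_Gamma_mul_fracLIntegral {ρ t : ℝ} (hρ : 0 < ρ) (hρ1 : ρ < 1)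
    (ht : 0 < t) {v : ℝ → ℝ≥0∞} (hv : ∫⁻ σ in Ioc 0 t, v σ ≠ ∞) (a : ℝ) :
    Tendsto (fun n : ℕ => ENNReal.ofReal (a ^ n / Gamma (n * ρ)) * fracLIntegral (n * ρ) v t)
      atTop (𝓝 0) := by
  set M := ∫⁻ σ in Ioc 0 t, v σ
  have hupper : Tendsto (fun n : ℕ => ENNReal.ofReal ((a * t ^ ρ) ^ n / Gamma (n * ρ) * t⁻¹) * M)
      atTop (𝓝 0) := by
    have h := ENNReal.Tendsto.mul_const (ENNReal.tendsto_ofReal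
      ((tendsto_pow_div_Gamma_mul (a * t ^ ρ) hρ hρ1).mul_const t⁻¹)) (Or.inr hv)
    simpa using h
  have hnρ : ∀ᶠ n : ℕ in atTop, 1 ≤ (n : ℝ) * ρ :=
    (tendsto_natCast_atTop_atTop.atTop_mul_const hρ).eventually_ge_atTop 1
  refine tendsto_of_tendsto_of_tendsto_of_le_of_le' tendsto_const_nhds hupper
    (.of_forall fun _ => zero_le) ?_
  filter_upwards [hnρ] with n hn
  calc ENNReal.ofReal (a ^ n / Gamma (n * ρ)) * fracLIntegral (n * ρ) v t
      ≤ ENNReal.ofReal (a ^ n / Gamma (n * ρ)) * (ENNReal.ofReal (t ^ (n * ρ - 1)) * M) := by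
        gcongr; exact fracLIntegral_le_of_one_le hn
    _ = ENNReal.ofReal ((a * t ^ ρ) ^ n / Gamma (n * ρ) * t⁻¹) * M := by
      rw [← mul_assoc, ← ENNReal.ofReal_mul' (rpow_nonneg ht.le _), rpow_sub_one ht.ne',
        mul_comm (n : ℝ), rpow_mul_natCast ht.le]
      congr 2
      ring

theorem ofReal_integral_le_lintegral_ofReal {α : Type*} [MeasurableSpace α] {μ : Measure α}
    (f : α → ℝ) : ENNReal.ofReal (∫ a, f a ∂μ) ≤ ∫⁻ a, ENNReal.ofReal (f a) ∂μ := by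
  by_cases hf : Integrable f μ
  · rw [integral_eq_lintegral_pos_part_sub_lintegral_neg_part hf]
    exact (ENNReal.ofReal_le_ofReal (sub_le_self _ ENNReal.toReal_nonneg)).trans
      ENNReal.ofReal_toReal_le
  · simp [integral_undef hf]

theorem ofReal_intervalIntegral_le_fracLIntegral (β : ℝ) {s : ℝ} (hs : 0 ≤ s) (y : ℝ → ℝ) :
    ENNReal.ofReal (∫ τ in (0 : ℝ)..s, (s - τ) ^ (β - 1) * y τ) ≤
      fracLIntegral β (fun σ => ENNReal.ofReal (y σ)) s := by
  rw [intervalIntegral.integral_of_le hs]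
  refine (ofReal_integral_le_lintegral_ofReal _).trans_eq
    (setLIntegral_congr_fun measurableSet_Ioc fun σ hσ => ?_)
  rw [ENNReal.ofReal_mul (rpow_nonneg (by linarith [hσ.2]) _)]

theorem le_mul_mittagLeffler1_of_le_fracLIntegral {c ρ z t : ℝ} (hc : 0 ≤ c) (hρ : 0 < ρ)
    (hρ1 : ρ < 1) (hz : 0 ≤ z) (ht : 0 < t) {y : ℝ → ℝ} (hy_int : IntegrableOn y (Ioc 0 t))
    (hy : ∀ s ∈ Ioc 0 t, ENNReal.ofReal (y s) ≤
      ENNReal.ofReal z + ENNReal.ofReal c * fracLIntegral ρ (fun σ => ENNReal.ofReal (y σ)) s) :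
    y t ≤ z * mittagLeffler1 ρ (c * Gamma ρ * t ^ ρ) := by
  set x := c * Gamma ρ * t ^ ρ
  have hE := hasSum_mittagLeffler1 x hρ hρ1
  have hpartial : Tendsto (fun n => ENNReal.ofReal z *
      ∑ k ∈ Finset.range n, ENNReal.ofReal (x ^ k / Gamma (k * ρ + 1)))
      atTop (𝓝 (ENNReal.ofReal (z * mittagLeffler1 ρ x))) := by
    rw [ENNReal.ofReal_mul hz, ← hE.tsum_eq,
      ENNReal.ofReal_tsum_of_nonneg (fun k => by positivity) hE.summable]
    exact ENNReal.Tendsto.const_mul (ENNReal.tendsto_nat_tsum _) (Or.inr ENNReal.ofReal_ne_top)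
  have hremainder := tendsto_ofReal_pow_div_Gamma_mul_fracLIntegral hρ hρ1 ht
    hy_int.lintegral_lt_top.ne (c * Gamma ρ)
  have hbound := fun n (hn : 1 ≤ n) => le_partialSum_add_fracLIntegral z hc hρ
    hy_int.aemeasurable.ennreal_ofReal hy hn ⟨ht, le_rfl⟩
  have hlim := ge_of_tendsto (hpartial.add hremainder)
    ((eventually_ge_atTop 1).mono hbound)
  rw [add_zero] at hlim
  exact (ENNReal.ofReal_le_ofReal_iff (mul_nonneg hz (hE.nonneg fun k => by positivity))).1 hlim

theorem stmt_7_general (c ρ z : ℝ) (b : EReal) (hc : 0 ≤ c) (hρ : 0 < ρ) (hρ1 : ρ < 1)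
    (hz : 0 ≤ z) (y : ℝ → ℝ)
    (hy_int : ∀ t : ℝ, 0 ≤ t → (t : EReal) < b → IntervalIntegrable y volume 0 t)
    (hy : ∀ t : ℝ, 0 ≤ t → (t : EReal) < b →
      y t ≤ z + c * ∫ τ in (0:ℝ)..t, (t - τ) ^ (ρ - 1) * y τ) :
    ∀ t : ℝ, 0 ≤ t → (t : EReal) < b →
      y t ≤ z * mittagLeffler1 ρ (c * Real.Gamma ρ * t ^ ρ) := by
  intro t ht htb
  rcases ht.eq_or_lt with rfl | ht
  · simpa [zero_rpow hρ.ne', mittagLeffler1_zero] using hy 0 le_rfl htb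
  refine le_mul_mittagLeffler1_of_le_fracLIntegral hc hρ hρ1 hz ht (hy_int t ht.le htb).1
    fun s hs => ?_
  have hsb : (s : EReal) < b := lt_of_le_of_lt (EReal.coe_le_coe_iff.2 hs.2) htb
  calc ENNReal.ofReal (y s)
      ≤ ENNReal.ofReal z + ENNReal.ofReal (c * ∫ τ in (0 : ℝ)..s, (s - τ) ^ (ρ - 1) * y τ) :=
        (ENNReal.ofReal_le_ofReal (hy s hs.1.le hsb)).trans ENNReal.ofReal_add_le
    _ ≤ _ := by
      rw [ENNReal.ofReal_mul hc]
      gcongr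
      exact ofReal_intervalIntegral_le_fracLIntegral ρ hs.1.le y

/-- Fractional Gronwall inequality (Henry's lemma) with constant forcing term. -/
theorem stmt_7 (c ρ z : ℝ) (b : EReal) (hc : 0 ≤ c) (hρ : 0 < ρ) (hρ1 : ρ < 1)
    (hz : 0 ≤ z) (hb : 0 < b) (y : ℝ → ℝ)
    (hy_nonneg : ∀ t : ℝ, 0 ≤ t → (t : EReal) < b → 0 ≤ y t)
    (hy_int : ∀ t : ℝ, 0 ≤ t → (t : EReal) < b → IntervalIntegrable y volume 0 t)
    (hy : ∀ t : ℝ, 0 ≤ t → (t : EReal) < b →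
      y t ≤ z + c * ∫ τ in (0:ℝ)..t, (t - τ) ^ (ρ - 1) * y τ) :
    ∀ t : ℝ, 0 ≤ t → (t : EReal) < b →
      y t ≤ z * mittagLeffler1 ρ (c * Real.Gamma ρ * t ^ ρ) :=
  stmt_7_general c ρ z b hc hρ hρ1 hz y hy_int hy
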